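/- arXiv:2012.14031 — 10 statements merged into one kernel-verified Lean document; each statement's English description precedes it below -/
import Mathlib

section
/- Let u = (u₀,…,u₇) ∈ ℝ⁸ be a unit vector, identified with the 3-qubit state Σ u_k |k⟩ (k in binary). There exist angles θ₀ and θ₂ such that the state (R_y(θ₂) ⊗ I ⊗ R_y(θ₀)) u has its coefficients on |001⟩ and |100⟩ (i.e., coordinates indexed 1 and 4) equal to zero. -/
open Real Matrix Kronecker

noncomputable def Ry (θ : ℝ) : Matrix (Fin 2) (Fin 2) ℝ :=
  !![Real.cos (θ/2), -Real.sin (θ/2); Real.sin (θ/2), Real.cos (θ/2)]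

private lemma circle' (x y : ℝ) (h : x^2 + y^2 = 1) :
    ∃ θ, Real.cos θ = x ∧ Real.sin θ = y := by
  have hx1 : -1 ≤ x := by nlinarith [sq_nonneg y]
  have hx2 : x ≤ 1 := by nlinarith [sq_nonneg y]
  rcases le_or_gt 0 y with hy | hy
  · refine ⟨Real.arccos x, Real.cos_arccos hx1 hx2, ?_⟩
    rw [Real.sin_arccos, show (1:ℝ) - x^2 = y^2 by linarith]
    exact Real.sqrt_sq hy
  · refine ⟨-Real.arccos x, by rw [Real.cos_neg]; exact Real.cos_arccos hx1 hx2, ?_⟩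
    rw [Real.sin_neg, Real.sin_arccos, show (1:ℝ) - x^2 = y^2 by linarith,
      Real.sqrt_sq_eq_abs, abs_of_neg hy]
    ring

private lemma exists_dir (x y : ℝ) :
    ∃ θ r : ℝ, 0 ≤ r ∧ x = Real.cos θ * r ∧ y = Real.sin θ * r ∧ (r = 0 → x = 0 ∧ y = 0) := by
  rcases eq_or_lt_of_le (by positivity : (0:ℝ) ≤ x^2 + y^2) with h | h
  · have hx : x = 0 := by nlinarith [sq_nonneg x, sq_nonneg y]
    have hy : y = 0 := by nlinarith [sq_nonneg x, sq_nonneg y]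
    exact ⟨0, 0, le_refl 0, by simp [hx], by simp [hy], fun _ => ⟨hx, hy⟩⟩
  · set r := Real.sqrt (x^2 + y^2) with hr
    have hrpos : 0 < r := Real.sqrt_pos.mpr h
    have hr2 : r^2 = x^2 + y^2 := Real.sq_sqrt (le_of_lt h)
    obtain ⟨θ, hc, hs⟩ := circle' (x/r) (y/r) (by field_simp; linarith)
    refine ⟨θ, r, le_of_lt hrpos, ?_, ?_, fun h0 => absurd h0 (ne_of_gt hrpos)⟩
    · rw [hc]; field_simp
    · rw [hs]; field_simp

private lemma aux0 (p q : ℝ) : ∃ θ, Real.sin θ * p + Real.cos θ * q = 0 := by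
  obtain ⟨θ, r, _, hp, hq, _⟩ := exists_dir p (-q)
  refine ⟨θ, ?_⟩
  have : -q = Real.sin θ * r := hq
  rw [hp, show q = -(Real.sin θ * r) by linarith]
  ring

private lemma aux (A B C D : ℝ) (h : A*C + B*D = 0) :
    ∃ θ, Real.cos θ * A - Real.sin θ * B = 0 ∧ Real.sin θ * C + Real.cos θ * D = 0 := by
  obtain ⟨θ, r, hr0, h1, h2, hz⟩ := exists_dir (B + C) (A - D)
  rcases eq_or_lt_of_le hr0 with hr | hr
  · obtain ⟨e1, e2⟩ := hz hr.symm
    obtain ⟨θ', r', hr0', h1', h2', hz'⟩ := exists_dir (B - C) (A + D)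
    rcases eq_or_lt_of_le hr0' with hr' | hr'
    · obtain ⟨e3, e4⟩ := hz' hr'.symm
      have hA : A = 0 := by linarith
      have hB : B = 0 := by linarith
      have hC : C = 0 := by linarith
      have hD : D = 0 := by linarith
      exact ⟨0, by simp [hA, hB], by simp [hC, hD]⟩
    · refine ⟨θ', ?_, ?_⟩
      · have key : r' * (Real.cos θ' * A - Real.sin θ' * B) = 0 := by
          linear_combination (-A)*h1' + B*h2' - h
        rcases mul_eq_zero.mp key with h' | h'
        · exact absurd h' (ne_of_gt hr')
        · exact h'
      · have key : r' * (Real.sin θ' * C + Real.cos θ' * D) = 0 := by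
          linear_combination (-C)*h2' + (-D)*h1' + h
        rcases mul_eq_zero.mp key with h' | h'
        · exact absurd h' (ne_of_gt hr')
        · exact h'
  · refine ⟨θ, ?_, ?_⟩
    · have key : r * (Real.cos θ * A - Real.sin θ * B) = 0 := by
        linear_combination (-A)*h1 + B*h2 + h
      rcases mul_eq_zero.mp key with h' | h'
      · exact absurd h' (ne_of_gt hr)
      · exact h'
    · have key : r * (Real.sin θ * C + Real.cos θ * D) = 0 := by
        linear_combination (-C)*h2 + (-D)*h1 + h
      rcases mul_eq_zero.mp key with h' | h'
      · exact absurd h' (ne_of_gt hr)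
      · exact h'

theorem stmt1 (u : Fin 2 × Fin 2 × Fin 2 → ℝ) (hu : ∑ k, u k ^ 2 = 1) :
    ∃ θ₀ θ₂ : ℝ,
      ((Ry θ₂ ⊗ₖ ((1 : Matrix (Fin 2) (Fin 2) ℝ) ⊗ₖ Ry θ₀)).mulVec u) (0, 0, 1) = 0 ∧
      ((Ry θ₂ ⊗ₖ ((1 : Matrix (Fin 2) (Fin 2) ℝ) ⊗ₖ Ry θ₀)).mulVec u) (1, 0, 0) = 0 := by
  set a := u (0,0,0) with ha
  set b := u (0,0,1) with hb
  set e := u (1,0,0) with he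
  set f := u (1,0,1) with hf
  obtain ⟨θ₀, hθ₀⟩ := aux0 ((a^2 - b^2 + e^2 - f^2)/2) (a*b + e*f)
  set s0 := Real.sin (θ₀/2) with hs0
  set c0 := Real.cos (θ₀/2) with hc0
  have hsin : Real.sin θ₀ = 2 * s0 * c0 := by
    have h1 := Real.sin_two_mul (θ₀/2)
    rw [show 2 * (θ₀/2) = θ₀ by ring] at h1
    simp only [hs0, hc0]; linarith [h1]
  have hcos : Real.cos θ₀ = c0^2 - s0^2 := by
    have h1 := Real.cos_two_mul (θ₀/2)
    have h2 := Real.sin_sq_add_cos_sq (θ₀/2)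
    rw [hc0, hs0]
    rw [show 2 * (θ₀/2) = θ₀ by ring] at h1
    nlinarith
  set A := s0 * a + c0 * b with hA
  set B := s0 * e + c0 * f with hB
  set C := c0 * a - s0 * b with hC
  set D := c0 * e - s0 * f with hD
  have hABCD : A * C + B * D = 0 := by
    rw [hA, hB, hC, hD]
    have := hθ₀
    rw [hsin, hcos] at this
    nlinarith [this]
  obtain ⟨θ, h1, h2⟩ := aux A B C D hABCD
  simp only [hA, hB, hC, hD, hs0, hc0, ha, hb, he, hf] at h1 h2
  refine ⟨θ₀, 2 * θ, ?_, ?_⟩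
  · simp only [Matrix.mulVec, dotProduct, Fintype.sum_prod_type,
      Fin.sum_univ_two, Matrix.kroneckerMap_apply, Ry, Matrix.one_apply,
      Matrix.cons_val', Matrix.cons_val_zero, Matrix.cons_val_one, Matrix.head_cons,
      Matrix.empty_val', Matrix.cons_val_fin_one, Matrix.head_fin_const,
      show (2:ℝ) * θ / 2 = θ by ring]
    norm_num
    linear_combination h1
  · simp only [Matrix.mulVec, dotProduct, Fintype.sum_prod_type,
      Fin.sum_univ_two, Matrix.kroneckerMap_apply, Ry, Matrix.one_apply,
      Matrix.cons_val', Matrix.cons_val_zero, Matrix.cons_val_one, Matrix.head_cons,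
      Matrix.empty_val', Matrix.cons_val_fin_one, Matrix.head_fin_const,
      show (2:ℝ) * θ / 2 = θ by ring]
    norm_num
    linear_combination h2
end

section
/- The function I₀(x₁,…,x₆) = (x₂x₄ − x₁x₆)² + 4x₁x₃x₄x₅ is a first integral of the vector field X: its gradient is orthogonal to X at every point of M, i.e., Σᵢ (∂I₀/∂xᵢ)·Xᵢ = 0 whenever x₁²+…+x₆² = 1. -/
/-!
Along the line `x + t X` the derivative at `t = 0` of `I₀` is `∇I₀ · X`, and this polynomial
equals `2 x₁ x₄ (x₁ x₆ - x₂ x₄) (x₁² + ⋯ + x₆² - 1)`, which vanishes on the sphere.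
-/

def firstIntegral (x₁ x₂ x₃ x₄ x₅ x₆ : ℝ) : ℝ :=
  (x₂ * x₄ - x₁ * x₆) ^ 2 + 4 * x₁ * x₃ * x₄ * x₅

lemma hasDerivAt_firstIntegral_along_line (x₁ x₂ x₃ x₄ x₅ x₆ v₁ v₂ v₃ v₄ v₅ v₆ : ℝ) :
    HasDerivAt
      (fun t : ℝ => firstIntegral (x₁ + t * v₁) (x₂ + t * v₂) (x₃ + t * v₃)
        (x₄ + t * v₄) (x₅ + t * v₅) (x₆ + t * v₆))
      ((-2 * x₆ * (x₂ * x₄ - x₁ * x₆) + 4 * x₃ * x₄ * x₅) * v₁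
        + 2 * x₄ * (x₂ * x₄ - x₁ * x₆) * v₂
        + 4 * x₁ * x₄ * x₅ * v₃
        + (2 * x₂ * (x₂ * x₄ - x₁ * x₆) + 4 * x₁ * x₃ * x₅) * v₄
        + 4 * x₁ * x₃ * x₄ * v₅
        - 2 * x₁ * (x₂ * x₄ - x₁ * x₆) * v₆) 0 := by
  have line : ∀ a b : ℝ, HasDerivAt (fun t : ℝ => a + t * b) b 0 := fun a b => by
    simpa using ((hasDerivAt_id (0 : ℝ)).mul_const b).const_add a
  refine HasDerivAt.congr_deriv
    ((((line x₂ v₂).mul (line x₄ v₄)).sub ((line x₁ v₁).mul (line x₆ v₆))).pow 2 |>.add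
      ((((line x₁ v₁).const_mul 4).mul (line x₃ v₃)).mul (line x₄ v₄) |>.mul (line x₅ v₅))) ?_
  simp only [Pi.mul_apply, Pi.sub_apply, zero_mul, add_zero, Nat.cast_ofNat]
  ring

lemma gradient_firstIntegral_dot_field (x₁ x₂ x₃ x₄ x₅ x₆ : ℝ) :
    (-2 * x₆ * (x₂ * x₄ - x₁ * x₆) + 4 * x₃ * x₄ * x₅) * (x₂ * (x₁^2 - x₄^2))
      + 2 * x₄ * (x₂ * x₄ - x₁ * x₆) *
          (-x₁^3 + (x₃^2 + x₄^2 + x₅^2) * x₁ + 2 * x₃ * x₄ * x₅)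
      + 4 * x₁ * x₄ * x₅ * ((x₃ * x₄ + x₁ * x₅) * x₆ - x₂ * (x₁ * x₃ + x₄ * x₅))
      + (2 * x₂ * (x₂ * x₄ - x₁ * x₆) + 4 * x₁ * x₃ * x₅) * ((x₁^2 - x₄^2) * x₆)
      + 4 * x₁ * x₃ * x₄ * ((x₁ * x₃ + x₄ * x₅) * x₆ - x₂ * (x₃ * x₄ + x₁ * x₅))
      - 2 * x₁ * (x₂ * x₄ - x₁ * x₆) *
          (2 * x₄^3 + (x₂^2 + x₆^2 - 1) * x₄ - 2 * x₁ * x₃ * x₅)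
      = 2 * x₁ * x₄ * (x₁ * x₆ - x₂ * x₄) *
          (x₁^2 + x₂^2 + x₃^2 + x₄^2 + x₅^2 + x₆^2 - 1) := by
  ring

theorem stmt4 (x₁ x₂ x₃ x₄ x₅ x₆ : ℝ)
    (X₁ X₂ X₃ X₄ X₅ X₆ : ℝ)
    (hX₁ : X₁ = x₂ * (x₁^2 - x₄^2))
    (hX₂ : X₂ = -x₁^3 + (x₃^2 + x₄^2 + x₅^2) * x₁ + 2 * x₃ * x₄ * x₅)
    (hX₃ : X₃ = (x₃ * x₄ + x₁ * x₅) * x₆ - x₂ * (x₁ * x₃ + x₄ * x₅))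
    (hX₄ : X₄ = (x₁^2 - x₄^2) * x₆)
    (hX₅ : X₅ = (x₁ * x₃ + x₄ * x₅) * x₆ - x₂ * (x₃ * x₄ + x₁ * x₅))
    (hX₆ : X₆ = 2 * x₄^3 + (x₂^2 + x₆^2 - 1) * x₄ - 2 * x₁ * x₃ * x₅)
    (h : x₁^2 + x₂^2 + x₃^2 + x₄^2 + x₅^2 + x₆^2 = 1) :
    deriv (fun t : ℝ =>
      ((x₂ + t * X₂) * (x₄ + t * X₄) - (x₁ + t * X₁) * (x₆ + t * X₆))^2 +
      4 * (x₁ + t * X₁) * (x₃ + t * X₃) * (x₄ + t * X₄) * (x₅ + t * X₅)) 0 = 0 := by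
  refine (hasDerivAt_firstIntegral_along_line x₁ x₂ x₃ x₄ x₅ x₆ X₁ X₂ X₃ X₄ X₅ X₆).deriv.trans ?_
  subst hX₁ hX₂ hX₃ hX₄ hX₅ hX₆
  rw [gradient_firstIntegral_dot_field, h, sub_self, mul_zero]
end

section
/- The function I₂ = 2x₃⁴ + 2(x₂²+2x₄²+2x₆²−1)x₃² + 4x₂x₅x₆x₃ + 2x₄⁴ + 2x₆⁴ + 2x₅²x₆² − 2x₆² + x₄²(4x₆²−2) + 1 is a first integral of the vector field X on M: the directional derivative of I₂ along X vanishes at every point with x₁²+…+x₆² = 1. -/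
lemma deriv_poly4 (a0 a1 a2 a3 a4 : ℝ) :
    deriv (fun t : ℝ => a0 + a1*t + a2*t^2 + a3*t^3 + a4*t^4) 0 = a1 := by
  have h1 : HasDerivAt (fun t : ℝ => t) 1 0 := hasDerivAt_id 0
  have h2 : HasDerivAt (fun t : ℝ => t^2) 0 0 := by simpa using hasDerivAt_pow 2 (0:ℝ)
  have h3 : HasDerivAt (fun t : ℝ => t^3) 0 0 := by simpa using hasDerivAt_pow 3 (0:ℝ)
  have h4 : HasDerivAt (fun t : ℝ => t^4) 0 0 := by simpa using hasDerivAt_pow 4 (0:ℝ)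
  have H : HasDerivAt (fun t : ℝ => a0 + a1*t + a2*t^2 + a3*t^3 + a4*t^4)
      (a1*1 + a2*0 + a3*0 + a4*0) 0 :=
    ((((h1.const_mul a1).const_add a0).add (h2.const_mul a2)).add (h3.const_mul a3)).add
      (h4.const_mul a4)
  simpa using H.deriv

theorem stmt5 (x₁ x₂ x₃ x₄ x₅ x₆ : ℝ)
    (X₁ X₂ X₃ X₄ X₅ X₆ : ℝ)
    (hX₁ : X₁ = x₂ * (x₁^2 - x₄^2))
    (hX₂ : X₂ = -x₁^3 + (x₃^2 + x₄^2 + x₅^2) * x₁ + 2 * x₃ * x₄ * x₅)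
    (hX₃ : X₃ = (x₃ * x₄ + x₁ * x₅) * x₆ - x₂ * (x₁ * x₃ + x₄ * x₅))
    (hX₄ : X₄ = (x₁^2 - x₄^2) * x₆)
    (hX₅ : X₅ = (x₁ * x₃ + x₄ * x₅) * x₆ - x₂ * (x₃ * x₄ + x₁ * x₅))
    (hX₆ : X₆ = 2 * x₄^3 + (x₂^2 + x₆^2 - 1) * x₄ - 2 * x₁ * x₃ * x₅)
    (h : x₁^2 + x₂^2 + x₃^2 + x₄^2 + x₅^2 + x₆^2 = 1) :
    deriv (fun t : ℝ =>
      2 * (x₃ + t * X₃)^4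
      + 2 * ((x₂ + t * X₂)^2 + 2 * (x₄ + t * X₄)^2 + 2 * (x₆ + t * X₆)^2 - 1) * (x₃ + t * X₃)^2
      + 4 * (x₂ + t * X₂) * (x₅ + t * X₅) * (x₆ + t * X₆) * (x₃ + t * X₃)
      + 2 * (x₄ + t * X₄)^4 + 2 * (x₆ + t * X₆)^4
      + 2 * (x₅ + t * X₅)^2 * (x₆ + t * X₆)^2 - 2 * (x₆ + t * X₆)^2
      + (x₄ + t * X₄)^2 * (4 * (x₆ + t * X₆)^2 - 2) + 1) 0 = 0 := by
  have key : (fun t : ℝ =>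
      2 * (x₃ + t * X₃)^4
      + 2 * ((x₂ + t * X₂)^2 + 2 * (x₄ + t * X₄)^2 + 2 * (x₆ + t * X₆)^2 - 1) * (x₃ + t * X₃)^2
      + 4 * (x₂ + t * X₂) * (x₅ + t * X₅) * (x₆ + t * X₆) * (x₃ + t * X₃)
      + 2 * (x₄ + t * X₄)^4 + 2 * (x₆ + t * X₆)^4
      + 2 * (x₅ + t * X₅)^2 * (x₆ + t * X₆)^2 - 2 * (x₆ + t * X₆)^2
      + (x₄ + t * X₄)^2 * (4 * (x₆ + t * X₆)^2 - 2) + 1)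
      = (fun t : ℝ => (2*x₂^2*x₃^2 + 4*x₂*x₃*x₅*x₆ + 2*x₃^4 + 4*x₃^2*x₄^2 + 4*x₃^2*x₆^2 - 2*x₃^2 + 2*x₄^4 + 4*x₄^2*x₆^2 - 2*x₄^2 + 2*x₅^2*x₆^2 + 2*x₆^4 - 2*x₆^2 + 1) + (4*x₂^2*x₃*X₃ + 4*x₂*x₃^2*X₂ + 4*x₂*x₃*x₅*X₆ + 4*x₂*x₃*x₆*X₅ + 4*x₂*x₅*x₆*X₃ + 8*x₃^3*X₃ + 8*x₃^2*x₄*X₄ + 8*x₃^2*x₆*X₆ + 8*x₃*x₄^2*X₃ + 4*x₃*x₅*x₆*X₂ + 8*x₃*x₆^2*X₃ - 4*x₃*X₃ + 8*x₄^3*X₄ + 8*x₄^2*x₆*X₆ + 8*x₄*x₆^2*X₄ - 4*x₄*X₄ + 4*x₅^2*x₆*X₆ + 4*x₅*x₆^2*X₅ + 8*x₆^3*X₆ - 4*x₆*X₆)*t + (2*x₂^2*X₃^2 + 8*x₂*x₃*X₂*X₃ + 4*x₂*x₃*X₅*X₆ + 4*x₂*x₅*X₃*X₆ + 4*x₂*x₆*X₃*X₅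 + 2*x₃^2*X₂^2 + 12*x₃^2*X₃^2 + 4*x₃^2*X₄^2 + 4*x₃^2*X₆^2 + 16*x₃*x₄*X₃*X₄ + 4*x₃*x₅*X₂*X₆ + 4*x₃*x₆*X₂*X₅ + 16*x₃*x₆*X₃*X₆ + 4*x₄^2*X₃^2 + 12*x₄^2*X₄^2 + 4*x₄^2*X₆^2 + 16*x₄*x₆*X₄*X₆ + 2*x₅^2*X₆^2 + 4*x₅*x₆*X₂*X₃ + 8*x₅*x₆*X₅*X₆ + 4*x₆^2*X₃^2 + 4*x₆^2*X₄^2 + 2*x₆^2*X₅^2 + 12*x₆^2*X₆^2 - 2*X₃^2 - 2*X₄^2 - 2*X₆^2)*t^2 + (4*x₂*X₂*X₃^2 + 4*x₂*X₃*X₅*X₆ + 4*x₃*X₂^2*X₃ + 4*x₃*X₂*X₅*X₆ + 8*x₃*X₃^3 + 8*x₃*X₃*X₄^2 + 8*x₃*X₃*X₆^2 + 8*x₄*X₃^2*X₄ + 8*x₄*X₄^3 + 8*x₄*X₄*X₆^2 + 4*x₅*X₂*X₃*X₆ + 4*x₅*X₅*X₆^2 + 4*x₆*X₂*X₃*X₅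 + 8*x₆*X₃^2*X₆ + 8*x₆*X₄^2*X₆ + 4*x₆*X₅^2*X₆ + 8*x₆*X₆^3)*t^3 + (2*X₂^2*X₃^2 + 4*X₂*X₃*X₅*X₆ + 2*X₃^4 + 4*X₃^2*X₄^2 + 4*X₃^2*X₆^2 + 2*X₄^4 + 4*X₄^2*X₆^2 + 2*X₅^2*X₆^2 + 2*X₆^4)*t^4) := by
    funext t; ring
  rw [key, deriv_poly4]
  subst hX₁ hX₂ hX₃ hX₄ hX₅ hX₆
  linear_combination (-4*x₁*x₂*x₃^2 - 4*x₁*x₃*x₅*x₆ + 8*x₃^2*x₄*x₆ + 8*x₄^3*x₆ + 8*x₄*x₆^3 - 4*x₄*x₆) * h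
end

section
/- The function I₃ = x₁⁴ + 2(x₂²+x₄²)x₁² + 4x₂x₄x₆x₁ + x₂⁴ + x₃⁴ + x₄⁴ + x₅⁴ + x₆⁴ + 2x₃²x₅² + 2x₃²x₆² + 2x₄²x₆² + 2x₅²x₆² + 2x₂²(x₃²+x₅²+x₆²) is a first integral of the vector field X: Σᵢ (∂I₃/∂xᵢ)·Xᵢ = 0 at every point of the unit sphere x₁²+…+x₆² = 1. -/
/-!
Along the flow, `I₃` changes at rate `∇I₃ · X`, and a direct expansion gives
`∇I₃ · X = 4 x₄ (x₆ (x₂² + x₃² + x₄² + x₅² + x₆²) + x₁x₂x₄) (x₁² + ⋯ + x₆² - 1)`,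
which vanishes on the unit sphere.
-/

namespace FirstIntegral

def I₃ (x₁ x₂ x₃ x₄ x₅ x₆ : ℝ) : ℝ :=
  x₁^4 + 2 * (x₂^2 + x₄^2) * x₁^2 + 4 * x₂ * x₄ * x₆ * x₁
    + x₂^4 + x₃^4 + x₄^4 + x₅^4 + x₆^4
    + 2 * x₃^2 * x₅^2 + 2 * x₃^2 * x₆^2 + 2 * x₄^2 * x₆^2 + 2 * x₅^2 * x₆^2
    + 2 * x₂^2 * (x₃^2 + x₅^2 + x₆^2)

def lieDerivI₃ (x₁ x₂ x₃ x₄ x₅ x₆ X₁ X₂ X₃ X₄ X₅ X₆ : ℝ) : ℝ :=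
  (4 * x₁^3 + 4 * (x₂^2 + x₄^2) * x₁ + 4 * x₂ * x₄ * x₆) * X₁
    + (4 * x₂ * x₁^2 + 4 * x₄ * x₆ * x₁ + 4 * x₂^3 + 4 * x₂ * (x₃^2 + x₅^2 + x₆^2)) * X₂
    + (4 * x₃^3 + 4 * x₃ * x₅^2 + 4 * x₃ * x₆^2 + 4 * x₂^2 * x₃) * X₃
    + (4 * x₄ * x₁^2 + 4 * x₂ * x₆ * x₁ + 4 * x₄^3 + 4 * x₄ * x₆^2) * X₄
    + (4 * x₅^3 + 4 * x₃^2 * x₅ + 4 * x₅ * x₆^2 + 4 * x₂^2 * x₅) * X₅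
    + (4 * x₂ * x₄ * x₁ + 4 * x₆^3 + 4 * x₃^2 * x₆ + 4 * x₄^2 * x₆ + 4 * x₅^2 * x₆
        + 4 * x₂^2 * x₆) * X₆

lemma hasDerivAt_line (a b : ℝ) : HasDerivAt (fun t : ℝ => a + t * b) b 0 := by
  simpa using ((hasDerivAt_id (0 : ℝ)).mul_const b).const_add a

lemma hasDerivAt_I₃_line (x₁ x₂ x₃ x₄ x₅ x₆ X₁ X₂ X₃ X₄ X₅ X₆ : ℝ) :
    HasDerivAt
      (fun t : ℝ => I₃ (x₁ + t * X₁) (x₂ + t * X₂) (x₃ + t * X₃) (x₄ + t * X₄)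
        (x₅ + t * X₅) (x₆ + t * X₆))
      (lieDerivI₃ x₁ x₂ x₃ x₄ x₅ x₆ X₁ X₂ X₃ X₄ X₅ X₆) 0 := by
  have h₁ := hasDerivAt_line x₁ X₁
  have h₂ := hasDerivAt_line x₂ X₂
  have h₃ := hasDerivAt_line x₃ X₃
  have h₄ := hasDerivAt_line x₄ X₄
  have h₅ := hasDerivAt_line x₅ X₅
  have h₆ := hasDerivAt_line x₆ X₆
  have hd :=
    (h₁.pow 4)
      |>.add ((((h₂.pow 2).add (h₄.pow 2)).const_mul 2).mul (h₁.pow 2))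
      |>.add ((((h₂.const_mul 4).mul h₄).mul h₆).mul h₁)
      |>.add (h₂.pow 4) |>.add (h₃.pow 4) |>.add (h₄.pow 4) |>.add (h₅.pow 4) |>.add (h₆.pow 4)
      |>.add (((h₃.pow 2).const_mul 2).mul (h₅.pow 2))
      |>.add (((h₃.pow 2).const_mul 2).mul (h₆.pow 2))
      |>.add (((h₄.pow 2).const_mul 2).mul (h₆.pow 2))
      |>.add (((h₅.pow 2).const_mul 2).mul (h₆.pow 2))
      |>.add (((h₂.pow 2).const_mul 2).mul (((h₃.pow 2).add (h₅.pow 2)).add (h₆.pow 2)))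
  refine hd.congr_deriv ?_
  simp only [lieDerivI₃, zero_mul, add_zero]
  norm_num
  ring

lemma lieDerivI₃_eq (x₁ x₂ x₃ x₄ x₅ x₆ : ℝ) :
    lieDerivI₃ x₁ x₂ x₃ x₄ x₅ x₆
      (x₂ * (x₁^2 - x₄^2))
      (-x₁^3 + (x₃^2 + x₄^2 + x₅^2) * x₁ + 2 * x₃ * x₄ * x₅)
      ((x₃ * x₄ + x₁ * x₅) * x₆ - x₂ * (x₁ * x₃ + x₄ * x₅))
      ((x₁^2 - x₄^2) * x₆)
      ((x₁ * x₃ + x₄ * x₅) * x₆ - x₂ * (x₃ * x₄ + x₁ * x₅))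
      (2 * x₄^3 + (x₂^2 + x₆^2 - 1) * x₄ - 2 * x₁ * x₃ * x₅)
    = 4 * x₄ * (x₆ * (x₂^2 + x₃^2 + x₄^2 + x₅^2 + x₆^2) + x₁ * x₂ * x₄)
        * (x₁^2 + x₂^2 + x₃^2 + x₄^2 + x₅^2 + x₆^2 - 1) := by
  unfold lieDerivI₃
  ring

end FirstIntegral

open FirstIntegral in
theorem stmt6 (x₁ x₂ x₃ x₄ x₅ x₆ : ℝ)
    (X₁ X₂ X₃ X₄ X₅ X₆ : ℝ)
    (hX₁ : X₁ = x₂ * (x₁^2 - x₄^2))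
    (hX₂ : X₂ = -x₁^3 + (x₃^2 + x₄^2 + x₅^2) * x₁ + 2 * x₃ * x₄ * x₅)
    (hX₃ : X₃ = (x₃ * x₄ + x₁ * x₅) * x₆ - x₂ * (x₁ * x₃ + x₄ * x₅))
    (hX₄ : X₄ = (x₁^2 - x₄^2) * x₆)
    (hX₅ : X₅ = (x₁ * x₃ + x₄ * x₅) * x₆ - x₂ * (x₃ * x₄ + x₁ * x₅))
    (hX₆ : X₆ = 2 * x₄^3 + (x₂^2 + x₆^2 - 1) * x₄ - 2 * x₁ * x₃ * x₅)
    (h : x₁^2 + x₂^2 + x₃^2 + x₄^2 + x₅^2 + x₆^2 = 1) :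
    deriv (fun t : ℝ =>
      (x₁ + t * X₁)^4
      + 2 * ((x₂ + t * X₂)^2 + (x₄ + t * X₄)^2) * (x₁ + t * X₁)^2
      + 4 * (x₂ + t * X₂) * (x₄ + t * X₄) * (x₆ + t * X₆) * (x₁ + t * X₁)
      + (x₂ + t * X₂)^4 + (x₃ + t * X₃)^4 + (x₄ + t * X₄)^4 + (x₅ + t * X₅)^4 + (x₆ + t * X₆)^4
      + 2 * (x₃ + t * X₃)^2 * (x₅ + t * X₅)^2
      + 2 * (x₃ + t * X₃)^2 * (x₆ + t * X₆)^2
      + 2 * (x₄ + t * X₄)^2 * (x₆ + t * X₆)^2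
      + 2 * (x₅ + t * X₅)^2 * (x₆ + t * X₆)^2
      + 2 * (x₂ + t * X₂)^2 * ((x₃ + t * X₃)^2 + (x₅ + t * X₅)^2 + (x₆ + t * X₆)^2)) 0 = 0 := by
  change deriv (fun t : ℝ => I₃ (x₁ + t * X₁) (x₂ + t * X₂) (x₃ + t * X₃) (x₄ + t * X₄)
    (x₅ + t * X₅) (x₆ + t * X₆)) 0 = 0
  rw [(hasDerivAt_I₃_line x₁ x₂ x₃ x₄ x₅ x₆ X₁ X₂ X₃ X₄ X₅ X₆).deriv]
  subst hX₁ hX₂ hX₃ hX₄ hX₅ hX₆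
  rw [lieDerivI₃_eq, h, sub_self, mul_zero]
end

section
/- The function I₄ = 2x₄⁴ + (4x₅²+4x₆²−2)x₄² + 2x₅⁴ + 2x₆⁴ + 2x₃²x₆² − 2x₆² + 4x₂x₃x₅x₆ + 2x₅²(x₂²+2x₆²−1) + 1 is a first integral of the vector field X: its directional derivative along X vanishes at every point with x₁²+…+x₆² = 1. -/
/-!
Along the line `t ↦ x + t X` the derivative of `I₄` at `t = 0` is the polynomial `∇I₄ · X`, and
`∇I₄ · X` is a polynomial multiple of `x₁² + ⋯ + x₆² - 1`, so it vanishes on the unit sphere.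
-/

/-- `I₄` in the variables `(x₂, x₃, x₄, x₅, x₆)`; it does not involve `x₁`. -/
def I₄ (x₂ x₃ x₄ x₅ x₆ : ℝ) : ℝ :=
  2 * x₄^4 + (4 * x₅^2 + 4 * x₆^2 - 2) * x₄^2 + 2 * x₅^4 + 2 * x₆^4
    + 2 * x₃^2 * x₆^2 - 2 * x₆^2 + 4 * x₂ * x₃ * x₅ * x₆
    + 2 * x₅^2 * (x₂^2 + 2 * x₆^2 - 1) + 1

lemma hasDerivAt_const_add_mul (x v t : ℝ) : HasDerivAt (fun s : ℝ => x + s * v) v t := by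
  simpa using ((hasDerivAt_id t).mul_const v).const_add x

lemma hasDerivAt_I₄_line (x₂ x₃ x₄ x₅ x₆ v₂ v₃ v₄ v₅ v₆ : ℝ) :
    HasDerivAt
      (fun t : ℝ => I₄ (x₂ + t * v₂) (x₃ + t * v₃) (x₄ + t * v₄) (x₅ + t * v₅) (x₆ + t * v₆))
      ((4 * x₃ * x₅ * x₆ + 4 * x₂ * x₅^2) * v₂
        + (4 * x₃ * x₆^2 + 4 * x₂ * x₅ * x₆) * v₃
        + (8 * x₄^3 + (8 * x₅^2 + 8 * x₆^2 - 4) * x₄) * v₄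
        + (8 * x₄^2 * x₅ + 8 * x₅^3 + 4 * x₂ * x₃ * x₆ + 4 * x₅ * (x₂^2 + 2 * x₆^2 - 1)) * v₅
        + (8 * x₄^2 * x₆ + 8 * x₆^3 + 4 * x₃^2 * x₆ - 4 * x₆ + 4 * x₂ * x₃ * x₅
            + 8 * x₅^2 * x₆) * v₆) 0 := by
  have h₂ := hasDerivAt_const_add_mul x₂ v₂ 0
  have h₃ := hasDerivAt_const_add_mul x₃ v₃ 0
  have h₄ := hasDerivAt_const_add_mul x₄ v₄ 0
  have h₅ := hasDerivAt_const_add_mul x₅ v₅ 0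
  have h₆ := hasDerivAt_const_add_mul x₆ v₆ 0
  have h :=
    (((((((((h₄.pow 4).const_mul 2).add
      (((((h₅.pow 2).const_mul 4).add ((h₆.pow 2).const_mul 4)).sub_const 2).mul
        (h₄.pow 2))).add
      ((h₅.pow 4).const_mul 2)).add
      ((h₆.pow 4).const_mul 2)).add
      (((h₃.pow 2).const_mul 2).mul (h₆.pow 2))).sub
      ((h₆.pow 2).const_mul 2)).add
      ((((h₂.const_mul 4).mul h₃).mul h₅).mul h₆)).add
      (((h₅.pow 2).const_mul 2).mul
        (((h₂.pow 2).add ((h₆.pow 2).const_mul 2)).sub_const 1))).add_const 1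
  refine h.congr_deriv ?_
  simp only [Pi.pow_apply, Pi.mul_apply, Pi.add_apply]
  ring

lemma I₄_directionalDeriv_X (x₁ x₂ x₃ x₄ x₅ x₆ : ℝ) :
    (4 * x₃ * x₅ * x₆ + 4 * x₂ * x₅^2) * (-x₁^3 + (x₃^2 + x₄^2 + x₅^2) * x₁ + 2 * x₃ * x₄ * x₅)
      + (4 * x₃ * x₆^2 + 4 * x₂ * x₅ * x₆)
          * ((x₃ * x₄ + x₁ * x₅) * x₆ - x₂ * (x₁ * x₃ + x₄ * x₅))
      + (8 * x₄^3 + (8 * x₅^2 + 8 * x₆^2 - 4) * x₄) * ((x₁^2 - x₄^2) * x₆)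
      + (8 * x₄^2 * x₅ + 8 * x₅^3 + 4 * x₂ * x₃ * x₆ + 4 * x₅ * (x₂^2 + 2 * x₆^2 - 1))
          * ((x₁ * x₃ + x₄ * x₅) * x₆ - x₂ * (x₃ * x₄ + x₁ * x₅))
      + (8 * x₄^2 * x₆ + 8 * x₆^3 + 4 * x₃^2 * x₆ - 4 * x₆ + 4 * x₂ * x₃ * x₅ + 8 * x₅^2 * x₆)
          * (2 * x₄^3 + (x₂^2 + x₆^2 - 1) * x₄ - 2 * x₁ * x₃ * x₅)
    = 4 * (2 * x₄ * x₆^3 + 2 * x₄ * x₅^2 * x₆ + 2 * x₄^3 * x₆ - x₄ * x₆ - x₁ * x₃ * x₅ * x₆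
        - x₁ * x₂ * x₅^2) * (x₁^2 + x₂^2 + x₃^2 + x₄^2 + x₅^2 + x₆^2 - 1) := by
  ring

theorem stmt7_general (x₁ x₂ x₃ x₄ x₅ x₆ : ℝ)
    (X₂ X₃ X₄ X₅ X₆ : ℝ)
    (hX₂ : X₂ = -x₁^3 + (x₃^2 + x₄^2 + x₅^2) * x₁ + 2 * x₃ * x₄ * x₅)
    (hX₃ : X₃ = (x₃ * x₄ + x₁ * x₅) * x₆ - x₂ * (x₁ * x₃ + x₄ * x₅))
    (hX₄ : X₄ = (x₁^2 - x₄^2) * x₆)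
    (hX₅ : X₅ = (x₁ * x₃ + x₄ * x₅) * x₆ - x₂ * (x₃ * x₄ + x₁ * x₅))
    (hX₆ : X₆ = 2 * x₄^3 + (x₂^2 + x₆^2 - 1) * x₄ - 2 * x₁ * x₃ * x₅)
    (h : x₁^2 + x₂^2 + x₃^2 + x₄^2 + x₅^2 + x₆^2 = 1) :
    deriv (fun t : ℝ =>
      2 * (x₄ + t * X₄)^4
      + (4 * (x₅ + t * X₅)^2 + 4 * (x₆ + t * X₆)^2 - 2) * (x₄ + t * X₄)^2
      + 2 * (x₅ + t * X₅)^4 + 2 * (x₆ + t * X₆)^4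
      + 2 * (x₃ + t * X₃)^2 * (x₆ + t * X₆)^2 - 2 * (x₆ + t * X₆)^2
      + 4 * (x₂ + t * X₂) * (x₃ + t * X₃) * (x₅ + t * X₅) * (x₆ + t * X₆)
      + 2 * (x₅ + t * X₅)^2 * ((x₂ + t * X₂)^2 + 2 * (x₆ + t * X₆)^2 - 1) + 1) 0 = 0 := by
  change deriv (fun t : ℝ =>
    I₄ (x₂ + t * X₂) (x₃ + t * X₃) (x₄ + t * X₄) (x₅ + t * X₅) (x₆ + t * X₆)) 0 = 0
  rw [(hasDerivAt_I₄_line x₂ x₃ x₄ x₅ x₆ X₂ X₃ X₄ X₅ X₆).deriv]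
  subst hX₂ hX₃ hX₄ hX₅ hX₆
  rw [I₄_directionalDeriv_X, h, sub_self, mul_zero]

theorem stmt7 (x₁ x₂ x₃ x₄ x₅ x₆ : ℝ)
    (X₁ X₂ X₃ X₄ X₅ X₆ : ℝ)
    (hX₁ : X₁ = x₂ * (x₁^2 - x₄^2))
    (hX₂ : X₂ = -x₁^3 + (x₃^2 + x₄^2 + x₅^2) * x₁ + 2 * x₃ * x₄ * x₅)
    (hX₃ : X₃ = (x₃ * x₄ + x₁ * x₅) * x₆ - x₂ * (x₁ * x₃ + x₄ * x₅))
    (hX₄ : X₄ = (x₁^2 - x₄^2) * x₆)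
    (hX₅ : X₅ = (x₁ * x₃ + x₄ * x₅) * x₆ - x₂ * (x₃ * x₄ + x₁ * x₅))
    (hX₆ : X₆ = 2 * x₄^3 + (x₂^2 + x₆^2 - 1) * x₄ - 2 * x₁ * x₃ * x₅)
    (h : x₁^2 + x₂^2 + x₃^2 + x₄^2 + x₅^2 + x₆^2 = 1) :
    deriv (fun t : ℝ =>
      2 * (x₄ + t * X₄)^4
      + (4 * (x₅ + t * X₅)^2 + 4 * (x₆ + t * X₆)^2 - 2) * (x₄ + t * X₄)^2
      + 2 * (x₅ + t * X₅)^4 + 2 * (x₆ + t * X₆)^4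
      + 2 * (x₃ + t * X₃)^2 * (x₆ + t * X₆)^2 - 2 * (x₆ + t * X₆)^2
      + 4 * (x₂ + t * X₂) * (x₃ + t * X₃) * (x₅ + t * X₅) * (x₆ + t * X₆)
      + 2 * (x₅ + t * X₅)^2 * ((x₂ + t * X₂)^2 + 2 * (x₆ + t * X₆)^2 - 1) + 1) 0 = 0 :=
  stmt7_general x₁ x₂ x₃ x₄ x₅ x₆ X₂ X₃ X₄ X₅ X₆ hX₂ hX₃ hX₄ hX₅ hX₆ h
end

section
/- A point (x₁,…,x₆) on the unit sphere of ℝ⁶ is an equilibrium point of the vector field X (all components of X vanish) if and only if it belongs to the union S₁ ∪ S₂ ∪ S₃ ∪ P, where S₁ = {x₁ = x₄, x₃ = −x₅}, S₂ = {x₁ = −x₄, x₃ = x₅}, S₃ = {x₁ = x₄ = 0}, and P = {x₂ = x₆ = 0, −2x₁³+x₁+2x₃x₄x₅ = 0, 2x₄³−x₄−2x₁x₃x₅ = 0}. -/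
theorem stmt11 (x₁ x₂ x₃ x₄ x₅ x₆ : ℝ)
    (h : x₁^2 + x₂^2 + x₃^2 + x₄^2 + x₅^2 + x₆^2 = 1) :
    (    x₂ * (x₁^2 - x₄^2) = 0 ∧
    -x₁^3 + (x₃^2 + x₄^2 + x₅^2) * x₁ + 2 * x₃ * x₄ * x₅ = 0 ∧
    (x₃ * x₄ + x₁ * x₅) * x₆ - x₂ * (x₁ * x₃ + x₄ * x₅) = 0 ∧
    (x₁^2 - x₄^2) * x₆ = 0 ∧
    (x₁ * x₃ + x₄ * x₅) * x₆ - x₂ * (x₃ * x₄ + x₁ * x₅) = 0 ∧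
    2 * x₄^3 + (x₂^2 + x₆^2 - 1) * x₄ - 2 * x₁ * x₃ * x₅ = 0)
    ↔ ((x₁ = x₄ ∧ x₃ = -x₅) ∨ (x₁ = -x₄ ∧ x₃ = x₅) ∨ (x₁ = 0 ∧ x₄ = 0) ∨
       (x₂ = 0 ∧ x₆ = 0 ∧ -2 * x₁^3 + x₁ + 2 * x₃ * x₄ * x₅ = 0 ∧
        2 * x₄^3 - x₄ - 2 * x₁ * x₃ * x₅ = 0)) := by
  constructor
  · rintro ⟨e1, e2, e3, e4, e5, e6⟩
    by_cases hx : x₁^2 - x₄^2 = 0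
    · have hfac : (x₁ - x₄) * (x₁ + x₄) = 0 := by linear_combination hx
      rcases mul_eq_zero.mp hfac with h14 | h14
      · have hx14 : x₁ = x₄ := by linarith
        by_cases h10 : x₁ = 0
        · exact Or.inr (Or.inr (Or.inl ⟨h10, by linarith⟩))
        · left
          refine ⟨hx14, ?_⟩
          have : x₁ * (x₃ + x₅)^2 = 0 := by
            linear_combination e2 + (2*x₃*x₅ + x₁*(x₁+x₄)) * h14
          rcases mul_eq_zero.mp this with h' | h'
          · exact absurd h' h10
          · have := pow_eq_zero_iff (n := 2) (by norm_num) |>.mp h'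
            linarith
      · have hx14 : x₁ = -x₄ := by linarith
        by_cases h10 : x₁ = 0
        · exact Or.inr (Or.inr (Or.inl ⟨h10, by linarith⟩))
        · right; left
          refine ⟨hx14, ?_⟩
          have : x₁ * (x₃ - x₅)^2 = 0 := by
            linear_combination e2 + (-2*x₃*x₅ + x₁*(x₁-x₄)) * h14
          rcases mul_eq_zero.mp this with h' | h'
          · exact absurd h' h10
          · have := pow_eq_zero_iff (n := 2) (by norm_num) |>.mp h'
            linarith
    · have hx2 : x₂ = 0 := by
        rcases mul_eq_zero.mp e1 with h' | h'
        · exact h'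
        · exact absurd h' hx
      have hx6 : x₆ = 0 := by
        rcases mul_eq_zero.mp e4 with h' | h'
        · exact absurd h' hx
        · exact h'
      subst hx2 hx6
      right; right; right
      refine ⟨rfl, rfl, ?_, ?_⟩
      · linear_combination e2 - x₁ * h
      · linear_combination e6
  · rintro (⟨h14, h35⟩ | ⟨h14, h35⟩ | ⟨h1, h4⟩ | ⟨h2, h6, p1, p2⟩)
    · subst h14 h35
      refine ⟨by ring, by ring, by ring, by ring, by ring, by linear_combination x₁ * h⟩
    · subst h14 h35
      refine ⟨by ring, by ring, by ring, by ring, by ring, by linear_combination x₄ * h⟩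
    · subst h1 h4
      exact ⟨by ring, by ring, by ring, by ring, by ring, by ring⟩
    · subst h2 h6
      refine ⟨by ring, ?_, by ring, by ring, by ring, ?_⟩
      · linear_combination p1 + x₁ * h
      · linear_combination p2
end

section
/- Let u ∈ ℝ⁸ be a unit vector (identified with a real 3-qubit state). There exist angles θ₀, θ₁, θ₂ such that (R_y(θ₂) ⊗ R_y(θ₁) ⊗ R_y(θ₀)) u has coordinates indexed by the binary strings 001, 010, and 100 all equal to zero; that is, every real 3-qubit state is equivalent under local orthogonal rotations to one of the form λ₁|000⟩ + λ₂|011⟩ + λ₃|101⟩ + λ₄|110⟩ + λ₅|111⟩. -/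
/-!
The amplitude of `|000⟩` is a continuous function of the three angles, periodic in each, so it
attains a global maximum. Differentiating in the angle of one qubit turns the `|000⟩` amplitude
into `-1/2` times the amplitude with that qubit flipped, so at the maximum the amplitudes of
`|001⟩`, `|010⟩` and `|100⟩` vanish.
-/

open Real Matrix Kronecker

lemma Ry_periodic : Function.Periodic Ry (4 * π) := by
  intro θ
  have h : (θ + 4 * π) / 2 = θ / 2 + 2 * π := by ring
  simp only [Ry, h, cos_add_two_pi, sin_add_two_pi]

lemma continuous_Ry : Continuous Ry := by
  refine continuous_pi fun i => continuous_pi fun j => ?_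
  fin_cases i <;> fin_cases j <;> simp [Ry] <;> fun_prop

lemma isCompact_range_Ry : IsCompact (Set.range Ry) :=
  Ry_periodic.compact_of_continuous (by positivity) continuous_Ry

lemma hasDerivAt_Ry_zero (j : Fin 2) (θ : ℝ) :
    HasDerivAt (fun t => Ry t 0 j) (-(1/2) * Ry θ 1 j) θ := by
  have hhalf : HasDerivAt (fun t : ℝ => t / 2) (1/2) θ := (hasDerivAt_id θ).div_const 2
  fin_cases j
  · simpa [Ry, mul_comm] using hhalf.cos
  · simpa [Ry, mul_comm] using hhalf.sin.fun_neg

lemma kronecker_mulVec_apply {l l' m m' n n' R : Type*} [Fintype l'] [Fintype m'] [Fintype n']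
    [NonUnitalSemiring R] (A : Matrix l l' R) (B : Matrix m m' R) (C : Matrix n n' R)
    (u : l' × m' × n' → R) (a : l) (b : m) (c : n) :
    ((A ⊗ₖ (B ⊗ₖ C)) *ᵥ u) (a, b, c) = ∑ y, A a y.1 * (B b y.2.1 * (C c y.2.2 * u y)) := by
  simp only [mulVec, dotProduct, kroneckerMap_apply, mul_assoc]

section Derivatives

variable {k k' m n : Type*} [Fintype k] [Fintype k'] (θ : ℝ)

lemma hasDerivAt_Ry_kronecker_mulVec_apply (B : Matrix m k ℝ) (C : Matrix n k' ℝ)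
    (u : Fin 2 × k × k' → ℝ) (b : m) (c : n) :
    HasDerivAt (fun t => ((Ry t ⊗ₖ (B ⊗ₖ C)) *ᵥ u) (0, b, c))
      (-(1/2) * ((Ry θ ⊗ₖ (B ⊗ₖ C)) *ᵥ u) (1, b, c)) θ := by
  simp only [kronecker_mulVec_apply, Finset.mul_sum]
  exact HasDerivAt.fun_sum fun y _ =>
    ((hasDerivAt_Ry_zero y.1 θ).mul_const _).congr_deriv (by ring)

lemma hasDerivAt_kronecker_Ry_kronecker_mulVec_apply (A : Matrix m k ℝ) (C : Matrix n k' ℝ)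
    (u : k × Fin 2 × k' → ℝ) (a : m) (c : n) :
    HasDerivAt (fun t => ((A ⊗ₖ (Ry t ⊗ₖ C)) *ᵥ u) (a, 0, c))
      (-(1/2) * ((A ⊗ₖ (Ry θ ⊗ₖ C)) *ᵥ u) (a, 1, c)) θ := by
  simp only [kronecker_mulVec_apply, Finset.mul_sum]
  exact HasDerivAt.fun_sum fun y _ =>
    (((hasDerivAt_Ry_zero y.2.1 θ).mul_const _).const_mul _).congr_deriv (by ring)

lemma hasDerivAt_kronecker_kronecker_Ry_mulVec_apply (A : Matrix m k ℝ) (B : Matrix n k' ℝ)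
    (u : k × k' × Fin 2 → ℝ) (a : m) (b : n) :
    HasDerivAt (fun t => ((A ⊗ₖ (B ⊗ₖ Ry t)) *ᵥ u) (a, b, 0))
      (-(1/2) * ((A ⊗ₖ (B ⊗ₖ Ry θ)) *ᵥ u) (a, b, 1)) θ := by
  simp only [kronecker_mulVec_apply, Finset.mul_sum]
  exact HasDerivAt.fun_sum fun y _ =>
    ((((hasDerivAt_Ry_zero y.2.2 θ).mul_const _).const_mul _).const_mul _).congr_deriv (by ring)

end Derivatives

lemma exists_forall_kronecker_Ry_mulVec_apply_le (u : Fin 2 × Fin 2 × Fin 2 → ℝ) :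
    ∃ a b c : ℝ, ∀ a' b' c' : ℝ,
      ((Ry a' ⊗ₖ (Ry b' ⊗ₖ Ry c')) *ᵥ u) (0, 0, 0) ≤ ((Ry a ⊗ₖ (Ry b ⊗ₖ Ry c)) *ᵥ u) (0, 0, 0) := by
  have hS := isCompact_range_Ry
  have hne : (Set.range Ry ×ˢ Set.range Ry ×ˢ Set.range Ry).Nonempty :=
    (Set.range_nonempty _).prod ((Set.range_nonempty _).prod (Set.range_nonempty _))
  have hcont : Continuous fun p : Matrix (Fin 2) (Fin 2) ℝ × Matrix (Fin 2) (Fin 2) ℝ ×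
      Matrix (Fin 2) (Fin 2) ℝ => ((p.1 ⊗ₖ (p.2.1 ⊗ₖ p.2.2)) *ᵥ u) (0, 0, 0) := by
    simp only [kronecker_mulVec_apply]
    fun_prop
  obtain ⟨⟨_, _, _⟩, ⟨⟨a, rfl⟩, ⟨b, rfl⟩, ⟨c, rfl⟩⟩, hmax⟩ :=
    (hS.prod (hS.prod hS)).exists_isMaxOn hne hcont.continuousOn
  exact ⟨a, b, c, fun a' b' c' =>
    isMaxOn_iff.mp hmax (Ry a', Ry b', Ry c') ⟨⟨a', rfl⟩, ⟨b', rfl⟩, ⟨c', rfl⟩⟩⟩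

theorem stmt14_general (u : Fin 2 × Fin 2 × Fin 2 → ℝ) :
    ∃ θ₀ θ₁ θ₂ : ℝ,
      ((Ry θ₂ ⊗ₖ (Ry θ₁ ⊗ₖ Ry θ₀)).mulVec u) (0, 0, 1) = 0 ∧
      ((Ry θ₂ ⊗ₖ (Ry θ₁ ⊗ₖ Ry θ₀)).mulVec u) (0, 1, 0) = 0 ∧
      ((Ry θ₂ ⊗ₖ (Ry θ₁ ⊗ₖ Ry θ₀)).mulVec u) (1, 0, 0) = 0 := by
  obtain ⟨a, b, c, hmax⟩ := exists_forall_kronecker_Ry_mulVec_apply_le u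
  refine ⟨c, b, a, ?_, ?_, ?_⟩
  · have := IsLocalMax.hasDerivAt_eq_zero (.of_forall fun t => hmax a b t)
      (hasDerivAt_kronecker_kronecker_Ry_mulVec_apply c (Ry a) (Ry b) u 0 0)
    linarith
  · have := IsLocalMax.hasDerivAt_eq_zero (.of_forall fun t => hmax a t c)
      (hasDerivAt_kronecker_Ry_kronecker_mulVec_apply b (Ry a) (Ry c) u 0 0)
    linarith
  · have := IsLocalMax.hasDerivAt_eq_zero (.of_forall fun t => hmax t b c)
      (hasDerivAt_Ry_kronecker_mulVec_apply a (Ry b) (Ry c) u 0 0)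
    linarith

theorem stmt14 (u : Fin 2 × Fin 2 × Fin 2 → ℝ) (hu : ∑ k, u k ^ 2 = 1) :
    ∃ θ₀ θ₁ θ₂ : ℝ,
      ((Ry θ₂ ⊗ₖ (Ry θ₁ ⊗ₖ Ry θ₀)).mulVec u) (0, 0, 1) = 0 ∧
      ((Ry θ₂ ⊗ₖ (Ry θ₁ ⊗ₖ Ry θ₀)).mulVec u) (0, 1, 0) = 0 ∧
      ((Ry θ₂ ⊗ₖ (Ry θ₁ ⊗ₖ Ry θ₀)).mulVec u) (1, 0, 0) = 0 :=
  stmt14_general u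
end

section
/- Let w = (w₁, 0, w₂, w₃, 0, w₄, w₅, w₆) ∈ ℝ⁸ be a unit vector with w₄ = w₁ and w₅ = −w₃. Then for all θ₁, θ₂, the vector v = (R_y(θ₂) ⊗ R_y(θ₁) ⊗ R_y(−θ₂)) w satisfies v₄ = −v₁' where v₁' denotes the coordinate indexed by 001 and v₄ the coordinate indexed by 100; namely the coefficient of |100⟩ is the negative of the coefficient of |001⟩. -/
open Real Matrix Kronecker

theorem stmt15 (w : Fin 2 × Fin 2 × Fin 2 → ℝ) (hw : ∑ k, w k ^ 2 = 1)
    (h001 : w (0, 0, 1) = 0) (h100 : w (1, 0, 0) = 0)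
    (h4 : w (1, 0, 1) = w (0, 0, 0)) (h5 : w (1, 1, 0) = -w (0, 1, 1))
    (θ₁ θ₂ : ℝ) :
    ((Ry θ₂ ⊗ₖ (Ry θ₁ ⊗ₖ Ry (-θ₂))).mulVec w) (1, 0, 0) =
      -((Ry θ₂ ⊗ₖ (Ry θ₁ ⊗ₖ Ry (-θ₂))).mulVec w) (0, 0, 1) := by
  simp only [Matrix.mulVec, dotProduct, Fintype.sum_prod_type, Fin.sum_univ_two,
    Matrix.kroneckerMap_apply, Ry, Matrix.cons_val', Matrix.cons_val_zero,
    Matrix.cons_val_one, Matrix.head_cons, Matrix.empty_val', Matrix.cons_val_fin_one,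
    Matrix.head_fin_const, Matrix.of_apply]
  rw [h001, h100, h4, h5]
  rw [show (-θ₂)/2 = -(θ₂/2) by ring, Real.cos_neg, Real.sin_neg]
  ring
end

section
/- Let w = (w₁, 0, w₂, w₃, 0, w₄, w₅, w₆) ∈ ℝ⁸ be a unit vector with w₄ = −w₁ and w₅ = w₃. Then for all θ₁, θ₂, the vector (R_y(θ₂) ⊗ R_y(θ₁) ⊗ R_y(θ₂)) w has its coordinate indexed by 100 equal to its coordinate indexed by 001. -/
open Real Matrix Kronecker

theorem stmt16 (w : Fin 2 × Fin 2 × Fin 2 → ℝ) (hw : ∑ k, w k ^ 2 = 1)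
    (h001 : w (0, 0, 1) = 0) (h100 : w (1, 0, 0) = 0)
    (h4 : w (1, 0, 1) = -w (0, 0, 0)) (h5 : w (1, 1, 0) = w (0, 1, 1))
    (θ₁ θ₂ : ℝ) :
    ((Ry θ₂ ⊗ₖ (Ry θ₁ ⊗ₖ Ry θ₂)).mulVec w) (1, 0, 0) =
      ((Ry θ₂ ⊗ₖ (Ry θ₁ ⊗ₖ Ry θ₂)).mulVec w) (0, 0, 1) := by
  have h100' : w (1, 0) = 0 := h100
  have h4' : w (1, (0, 1)) = -w 0 := h4
  have h5' : w (1, (1, 0)) = w (0, 1) := h5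
  simp [Matrix.mulVec, dotProduct, Fintype.sum_prod_type, Fin.sum_univ_succ,
    Ry, kroneckerMap_apply, h001, h100, h4, h5, h100', h4', h5']
  ring
end

section
/- Suppose x₁, x₄ : ℝ → ℝ are differentiable, x₂, x₆ : ℝ → ℝ are continuous, x₁'(t) = x₂(t)(x₁(t)² − x₄(t)²), x₄'(t) = x₆(t)(x₁(t)² − x₄(t)²), and x₁(0)² ≠ x₄(0)². Then x₁(t)² ≠ x₄(t)² for all t ∈ ℝ. -/
/-!
`y = x₁² - x₄²` solves the scalar linear equation `y' = 2 (x₁ x₂ - x₄ x₆) y` with continuous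
coefficient, so the integrating factor gives `y t = y 0 * exp (∫₀ᵗ 2 (x₁ x₂ - x₄ x₆))`, which
vanishes nowhere when `y 0 ≠ 0`.
-/

open Real intervalIntegral

theorem eq_mul_exp_integral_of_hasDerivAt_mul {y c : ℝ → ℝ} (hc : Continuous c)
    (hy : ∀ t, HasDerivAt y (c t * y t) t) (t : ℝ) :
    y t = y 0 * exp (∫ s in (0 : ℝ)..t, c s) := by
  set C : ℝ → ℝ := fun t => ∫ s in (0 : ℝ)..t, c s
  have hg : ∀ t, HasDerivAt (fun t => y t * exp (-C t)) 0 t := fun t =>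
    ((hy t).mul (hc.integral_hasStrictDerivAt 0 t).hasDerivAt.neg.exp).congr_deriv
      (by simp only [Pi.neg_apply]; ring)
  have hconst : y t * exp (-C t) = y 0 * exp (-C 0) :=
    is_const_of_deriv_eq_zero (fun s => (hg s).differentiableAt) (fun s => (hg s).deriv) t 0
  have hC0 : C 0 = 0 := integral_same
  rw [hC0, neg_zero, exp_zero, mul_one] at hconst
  rw [← hconst, mul_assoc, ← exp_add, neg_add_cancel, exp_zero, mul_one]

theorem ne_zero_of_hasDerivAt_mul {y c : ℝ → ℝ} (hc : Continuous c)
    (hy : ∀ t, HasDerivAt y (c t * y t) t) (h0 : y 0 ≠ 0) (t : ℝ) : y t ≠ 0 := by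
  rw [eq_mul_exp_integral_of_hasDerivAt_mul hc hy t]
  exact mul_ne_zero h0 (exp_ne_zero _)

theorem stmt18 (x₁ x₂ x₄ x₆ : ℝ → ℝ)
    (h2 : Continuous x₂) (h6 : Continuous x₆)
    (hd1 : ∀ t, HasDerivAt x₁ (x₂ t * (x₁ t ^ 2 - x₄ t ^ 2)) t)
    (hd4 : ∀ t, HasDerivAt x₄ (x₆ t * (x₁ t ^ 2 - x₄ t ^ 2)) t)
    (h0 : x₁ 0 ^ 2 ≠ x₄ 0 ^ 2) :
    ∀ t, x₁ t ^ 2 ≠ x₄ t ^ 2 := by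
  have hx₁ : Continuous x₁ := continuous_iff_continuousAt.2 fun t => (hd1 t).continuousAt
  have hx₄ : Continuous x₄ := continuous_iff_continuousAt.2 fun t => (hd4 t).continuousAt
  have hc : Continuous fun t => 2 * (x₁ t * x₂ t - x₄ t * x₆ t) := by fun_prop
  have hy : ∀ t, HasDerivAt (fun t => x₁ t ^ 2 - x₄ t ^ 2)
      (2 * (x₁ t * x₂ t - x₄ t * x₆ t) * (x₁ t ^ 2 - x₄ t ^ 2)) t := fun t =>
    (((hd1 t).pow 2).sub ((hd4 t).pow 2)).congr_deriv (by push_cast; ring)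
  intro t
  simpa only [ne_eq, sub_eq_zero] using
    ne_zero_of_hasDerivAt_mul hc hy (sub_ne_zero.2 h0) t
end
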